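/- arXiv:2507.00942 — 2 statements merged into one kernel-verified Lean document; each statement's English description precedes it below -/
import Mathlib

section
/- Let P₁, P₂, σ² > 0 and γ, β ∈ (0,1]. The equation σ²(γP₁ + βP₂ + 2√(γP₁βP₂)ρ + σ²) = (βP₂(1-ρ²) + σ²)(γP₁(1-ρ²) + σ²) has a unique root ρ* in the open interval (0,1). -/
theorem stmt5 (P₁ P₂ σ2 γ β : ℝ) (hP₁ : 0 < P₁) (hP₂ : 0 < P₂) (hσ : 0 < σ2)
    (hγ : γ ∈ Set.Ioc (0:ℝ) 1) (hβ : β ∈ Set.Ioc (0:ℝ) 1) :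
    ∃! ρ : ℝ, ρ ∈ Set.Ioo (0:ℝ) 1 ∧
      σ2 * (γ * P₁ + β * P₂ + 2 * Real.sqrt (γ * P₁ * β * P₂) * ρ + σ2) =
        (β * P₂ * (1 - ρ ^ 2) + σ2) * (γ * P₁ * (1 - ρ ^ 2) + σ2) := by
  have ha : 0 < γ * P₁ := mul_pos hγ.1 hP₁
  have hb : 0 < β * P₂ := mul_pos hβ.1 hP₂
  set a := γ * P₁ with ha'
  set b := β * P₂ with hb'
  set r := Real.sqrt (γ * P₁ * β * P₂) with hr'
  have hrpos : 0 < r := Real.sqrt_pos.2 (mul_pos (mul_pos ha hβ.1) hP₂)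
  set F : ℝ → ℝ := fun ρ => a * b * (1 - ρ ^ 2) ^ 2 - σ2 * (a + b) * ρ ^ 2 - 2 * σ2 * r * ρ
    with hF
  have key : ∀ ρ : ℝ,
      (σ2 * (a + b + 2 * r * ρ + σ2) = (b * (1 - ρ ^ 2) + σ2) * (a * (1 - ρ ^ 2) + σ2)) ↔
        F ρ = 0 := by
    intro ρ
    constructor <;> intro h
    · show a * b * (1 - ρ ^ 2) ^ 2 - σ2 * (a + b) * ρ ^ 2 - 2 * σ2 * r * ρ = 0
      linear_combination -h
    · have h' : a * b * (1 - ρ ^ 2) ^ 2 - σ2 * (a + b) * ρ ^ 2 - 2 * σ2 * r * ρ = 0 := h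
      linear_combination -h'
  have hanti : StrictAntiOn F (Set.Icc (0:ℝ) 1) := by
    intro x hx y hy hxy
    show a * b * (1 - y ^ 2) ^ 2 - σ2 * (a + b) * y ^ 2 - 2 * σ2 * r * y <
      a * b * (1 - x ^ 2) ^ 2 - σ2 * (a + b) * x ^ 2 - 2 * σ2 * r * x
    have h1 : x ^ 2 < y ^ 2 := by nlinarith [hx.1, hy.2]
    have h2 : 0 ≤ 2 - x ^ 2 - y ^ 2 := by nlinarith [hx.1, hy.2]
    have hyx : 0 < y - x := sub_pos.2 hxy
    have h3 : 0 < σ2 * r * (y - x) := by positivity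
    have h4 : 0 ≤ a * b * ((y ^ 2 - x ^ 2) * (2 - x ^ 2 - y ^ 2)) :=
      mul_nonneg (mul_pos ha hb).le (mul_nonneg (by linarith) h2)
    have h5 : 0 < σ2 * (a + b) * (y ^ 2 - x ^ 2) := by
      apply mul_pos (by positivity); linarith
    nlinarith [h3, h4, h5]
  have hcont : ContinuousOn F (Set.Icc (0:ℝ) 1) := by
    apply Continuous.continuousOn; fun_prop
  have hF0 : F 0 = a * b := by simp [hF]
  have hF1 : F 1 = -σ2 * (a + b) - 2 * σ2 * r := by simp [hF]
  have hmem : (0:ℝ) ∈ Set.Ioo (F 1) (F 0) := by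
    constructor
    · rw [hF1]; nlinarith
    · rw [hF0]; positivity
  obtain ⟨x, hx, hFx⟩ := intermediate_value_Ioo' (by norm_num : (0:ℝ) ≤ 1) hcont hmem
  refine ⟨x, ⟨hx, (key x).2 hFx⟩, ?_⟩
  rintro y ⟨hy, hyeq⟩
  have hFy : F y = 0 := (key y).1 hyeq
  exact hanti.injOn (Set.mem_Icc_of_Ioo hy) (Set.mem_Icc_of_Ioo hx) (hFy.trans hFx.symm)
end

section
/- The function f(ρ) = (1/2)log(1 + (γP₁ + βP₂ + 2√(γP₁βP₂)ρ)/σ²) − (1/2)log(1 + γP₁(1-ρ²)/σ²) − (1/2)log(1 + βP₂(1-ρ²)/σ²) is strictly increasing in ρ on [0,1], with f(0) ≤ 0 and f(1) > 0 (assuming γP₁, βP₂, σ² > 0), so f has a unique zero ρ* ∈ [0,1). -/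
theorem stmt12 (P₁ P₂ σ2 γ β : ℝ) (hP₁ : 0 < P₁) (hP₂ : 0 < P₂) (hσ : 0 < σ2)
    (hγ : γ ∈ Set.Ioc (0:ℝ) 1) (hβ : β ∈ Set.Ioc (0:ℝ) 1)
    (f : ℝ → ℝ)
    (hf : ∀ ρ : ℝ, f ρ =
      (1 / 2) * Real.log (1 + (γ * P₁ + β * P₂ + 2 * Real.sqrt (γ * P₁ * β * P₂) * ρ) / σ2) -
      (1 / 2) * Real.log (1 + γ * P₁ * (1 - ρ ^ 2) / σ2) -
      (1 / 2) * Real.log (1 + β * P₂ * (1 - ρ ^ 2) / σ2)) :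
    StrictMonoOn f (Set.Icc 0 1) ∧ f 0 ≤ 0 ∧ 0 < f 1 ∧
      ∃! ρ : ℝ, ρ ∈ Set.Ico (0:ℝ) 1 ∧ f ρ = 0 := by
  obtain ⟨hγ0, hγ1⟩ := hγ
  obtain ⟨hβ0, hβ1⟩ := hβ
  have ha : 0 < γ * P₁ := by positivity
  have hb : 0 < β * P₂ := by positivity
  have hc : 0 < Real.sqrt (γ * P₁ * β * P₂) := Real.sqrt_pos.mpr (by positivity)
  -- strict monotonicity
  have hmono : StrictMonoOn f (Set.Icc 0 1) := by
    intro x hx y hy hxy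
    obtain ⟨hx0, hx1⟩ := hx
    obtain ⟨hy0, hy1⟩ := hy
    rw [hf x, hf y]
    have hax : (0:ℝ) < 1 + (γ * P₁ + β * P₂ + 2 * Real.sqrt (γ * P₁ * β * P₂) * x) / σ2 := by
      have : 0 ≤ (γ * P₁ + β * P₂ + 2 * Real.sqrt (γ * P₁ * β * P₂) * x) / σ2 := by positivity
      linarith
    have h1 : Real.log (1 + (γ * P₁ + β * P₂ + 2 * Real.sqrt (γ * P₁ * β * P₂) * x) / σ2)
        < Real.log (1 + (γ * P₁ + β * P₂ + 2 * Real.sqrt (γ * P₁ * β * P₂) * y) / σ2) := by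
      apply Real.log_lt_log hax
      gcongr
    have hy2 : (0:ℝ) ≤ 1 - y ^ 2 := by nlinarith
    have hay : (0:ℝ) < 1 + γ * P₁ * (1 - y ^ 2) / σ2 := by
      have : 0 ≤ γ * P₁ * (1 - y ^ 2) / σ2 := by positivity
      linarith
    have hby : (0:ℝ) < 1 + β * P₂ * (1 - y ^ 2) / σ2 := by
      have : 0 ≤ β * P₂ * (1 - y ^ 2) / σ2 := by positivity
      linarith
    have h2 : Real.log (1 + γ * P₁ * (1 - y ^ 2) / σ2)
        ≤ Real.log (1 + γ * P₁ * (1 - x ^ 2) / σ2) := by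
      apply Real.log_le_log hay
      gcongr
    have h3 : Real.log (1 + β * P₂ * (1 - y ^ 2) / σ2)
        ≤ Real.log (1 + β * P₂ * (1 - x ^ 2) / σ2) := by
      apply Real.log_le_log hby
      gcongr
    linarith
  -- f 0 ≤ 0
  have hf0 : f 0 ≤ 0 := by
    rw [hf 0]
    have hA : (0:ℝ) < 1 + γ * P₁ / σ2 := by positivity
    have hB : (0:ℝ) < 1 + β * P₂ / σ2 := by positivity
    have harg : (0:ℝ) < 1 + (γ * P₁ + β * P₂ + 2 * Real.sqrt (γ * P₁ * β * P₂) * 0) / σ2 := by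
      positivity
    have hle : 1 + (γ * P₁ + β * P₂ + 2 * Real.sqrt (γ * P₁ * β * P₂) * 0) / σ2
        ≤ (1 + γ * P₁ / σ2) * (1 + β * P₂ / σ2) := by
      have h1 : (γ * P₁ + β * P₂ + 2 * Real.sqrt (γ * P₁ * β * P₂) * 0) / σ2
          = γ * P₁ / σ2 + β * P₂ / σ2 := by ring
      have h2 : 0 ≤ (γ * P₁ / σ2) * (β * P₂ / σ2) := by positivity
      nlinarith
    have := Real.log_le_log harg hle
    rw [Real.log_mul (ne_of_gt hA) (ne_of_gt hB)] at this
    norm_num at this ⊢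
    linarith
  -- f 1 > 0
  have hf1 : 0 < f 1 := by
    rw [hf 1]
    norm_num
    have harg : (1:ℝ) < 1 + (γ * P₁ + β * P₂ + 2 * Real.sqrt (γ * P₁ * β * P₂)) / σ2 := by
      have : 0 < (γ * P₁ + β * P₂ + 2 * Real.sqrt (γ * P₁ * β * P₂)) / σ2 := by positivity
      linarith
    have := Real.log_pos harg
    linarith
  refine ⟨hmono, hf0, hf1, ?_⟩
  -- continuity on Icc 0 1
  have hlogc : ∀ (a : ℝ), 0 < a →
      ContinuousOn (fun ρ : ℝ => Real.log (1 + a * (1 - ρ ^ 2) / σ2)) (Set.Icc 0 1) := by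
    intro a hA x hx
    have h2 : (0:ℝ) ≤ 1 - x ^ 2 := by nlinarith [hx.1, hx.2]
    have hpos : (0:ℝ) < 1 + a * (1 - x ^ 2) / σ2 := by
      have : 0 ≤ a * (1 - x ^ 2) / σ2 := by positivity
      linarith
    have hg : Continuous (fun ρ : ℝ => 1 + a * (1 - ρ ^ 2) / σ2) := by fun_prop
    exact (hg.continuousAt.log (ne_of_gt hpos)).continuousWithinAt
  have hcont : ContinuousOn f (Set.Icc 0 1) := by
    have heq : Set.EqOn f (fun ρ =>
      (1 / 2) * Real.log (1 + (γ * P₁ + β * P₂ + 2 * Real.sqrt (γ * P₁ * β * P₂) * ρ) / σ2) -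
      (1 / 2) * Real.log (1 + γ * P₁ * (1 - ρ ^ 2) / σ2) -
      (1 / 2) * Real.log (1 + β * P₂ * (1 - ρ ^ 2) / σ2)) (Set.Icc 0 1) := fun ρ _ => hf ρ
    rw [continuousOn_congr heq]
    apply ContinuousOn.sub
    apply ContinuousOn.sub
    · apply ContinuousOn.mul continuousOn_const
      intro x hx
      have hpos : (0:ℝ) < 1 + (γ * P₁ + β * P₂ + 2 * Real.sqrt (γ * P₁ * β * P₂) * x) / σ2 := by
        have : 0 ≤ (γ * P₁ + β * P₂ + 2 * Real.sqrt (γ * P₁ * β * P₂) * x) / σ2 := by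
          have := hx.1; positivity
        linarith
      have hg : Continuous (fun ρ : ℝ =>
          1 + (γ * P₁ + β * P₂ + 2 * Real.sqrt (γ * P₁ * β * P₂) * ρ) / σ2) := by fun_prop
      exact (hg.continuousAt.log (ne_of_gt hpos)).continuousWithinAt
    · exact ContinuousOn.mul continuousOn_const (hlogc _ ha)
    · exact ContinuousOn.mul continuousOn_const (hlogc _ hb)
  -- existence via IVT
  have hsub := intermediate_value_Icc (by norm_num : (0:ℝ) ≤ 1) hcont
  have h0mem : (0:ℝ) ∈ Set.Icc (f 0) (f 1) := ⟨hf0, le_of_lt hf1⟩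
  obtain ⟨ρ, hρ, hρ0⟩ := hsub h0mem
  have hρne : ρ ≠ 1 := by
    intro h; rw [h] at hρ0; linarith
  refine ⟨ρ, ⟨⟨hρ.1, lt_of_le_of_ne hρ.2 hρne⟩, hρ0⟩, ?_⟩
  rintro ρ' ⟨hρ'mem, hρ'0⟩
  have hu := hmono.injOn
  exact hu (Set.mem_Icc_of_Ico hρ'mem) ⟨hρ.1, hρ.2⟩ (by rw [hρ'0, hρ0])
end
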